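/- arXiv:0904.2876 — 4 statements merged into one kernel-verified Lean document; each statement's English description precedes it below -/
import Mathlib

section
/- Let T ∈ M_k(ℂ) be strictly upper triangular (T_{ij} = 0 for i ≥ j), let λ₁,…,λ_k ∈ ℂ, and set D = diag(λ₁,…,λ_k). Let p be a polynomial with p(λ₁) = 1 and p(λ_i) = 0 for 2 ≤ i ≤ k, and suppose moreover that T E_{11} = 0 and E_{11} T = 0 (i.e., the first row and column of T vanish). Then (p(D + T))^k has (1,1)-entry equal to 1, and in fact p(D+T) = E_{11} + T' where T' is strictly upper triangular with vanishing first row and column, so that (p(D+T))^k = E_{11}. -/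
open Matrix Polynomial

/-!
`A = D + T` is upper triangular and commutes with `E = E₁₁`, so `Q = p(A)` is upper
triangular, commutes with `E`, and has diagonal `(p(λᵢ))ᵢ = (1, 0, …, 0)`. Commuting with `E`
and `Q₁₁ = 1` force `E (Q - E) = (Q - E) E = 0`, and `Q - E` is strictly upper triangular,
hence `(Q - E)ᵏ = 0` by Cayley–Hamilton. Therefore `Qᵏ = (E + (Q - E))ᵏ = E + (Q - E)ᵏ = E`.
-/

theorem Commute.aeval_left {R A : Type*} [CommSemiring R] [Semiring A] [Algebra R A] {x y : A}
    (h : Commute x y) (p : R[X]) : Commute (aeval x p) y := by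
  rw [aeval_eq_sum_range]
  exact Commute.sum_left _ _ _ fun n _ => (h.pow_left n).smul_left _

theorem IsIdempotentElem.add_pow_succ_of_mul_eq_zero {A : Type*} [Semiring A] {e a : A}
    (he : IsIdempotentElem e) (hea : e * a = 0) (hae : a * e = 0) (k : ℕ) :
    (e + a) ^ (k + 1) = e + a ^ (k + 1) := by
  induction k with
  | zero => simp
  | succ k ih =>
    have hpow : a ^ (k + 1) * e = 0 := by rw [pow_succ, mul_assoc, hae, mul_zero]
    rw [pow_succ (e + a), ih, add_mul, mul_add, mul_add, he.eq, hea, hpow, ← pow_succ, add_zero,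
      zero_add]

namespace Matrix

variable {n R : Type*}

section single

variable [Fintype n] [DecidableEq n]

theorem single_one_mul_eq_of_commute [Semiring R] {M : Matrix n n R} (i : n)
    (h : Commute (single i i 1) M) : single i i 1 * M = single i i (M i i) := by
  conv_lhs => rw [← mul_one (1 : R), ← single_mul_single_same (1 : R) i i i 1, mul_assoc, h.eq,
    ← mul_assoc]
  simp

variable [Ring R] {M : Matrix n n R} {i : n}

theorem single_one_mul_sub_eq_zero (hM : Commute M (single i i 1)) (hMi : M i i = 1) :
    single i i 1 * (M - single i i 1) = 0 := by
  rw [mul_sub, single_one_mul_eq_of_commute i hM.symm, hMi, single_mul_single_same, mul_one,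
    sub_self]

theorem sub_single_one_mul_eq_zero (hM : Commute M (single i i 1)) (hMi : M i i = 1) :
    (M - single i i 1) * single i i 1 = 0 := by
  rw [sub_mul, hM.eq, ← mul_sub, single_one_mul_sub_eq_zero hM hMi]

end single

variable [LinearOrder n]

theorem pow_card_eq_zero_of_strictUpperTriangular [Fintype n] [DecidableEq n] [CommRing R]
    {M : Matrix n n R} (hM : ∀ i j, j ≤ i → M i j = 0) : M ^ Fintype.card n = 0 := by
  have hchar : M.charpoly = X ^ Fintype.card n := by
    simp [charpoly_of_isUpperTriangular M fun i j h => hM i j h.le, hM]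
  simpa [hchar] using aeval_self_charpoly M

namespace IsUpperTriangular

theorem sub_single_one_apply_eq_zero [DecidableEq n] [Ring R] {M : Matrix n n R}
    (hM : M.IsUpperTriangular) {i₀ : n} (hdiag : ∀ i, M i i = single i₀ i₀ 1 i i) {i j : n}
    (hji : j ≤ i) : (M - single i₀ i₀ 1 : Matrix n n R) i j = 0 := by
  rcases hji.lt_or_eq with hji | rfl
  · rw [Matrix.sub_apply, hM hji, blockTriangular_single (b := id) le_rfl 1 hji, sub_zero]
  · rw [Matrix.sub_apply, hdiag, sub_self]

variable [Fintype n]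

theorem mul_apply_self [NonUnitalNonAssocSemiring R] {M N : Matrix n n R}
    (hM : M.IsUpperTriangular) (hN : N.IsUpperTriangular) (i : n) :
    (M * N) i i = M i i * N i i := by
  rw [mul_apply, Finset.sum_eq_single i]
  · intro l _ hl
    rcases hl.lt_or_gt with hli | hil
    · rw [hM hli, zero_mul]
    · rw [hN hil, mul_zero]
  · simp

variable [DecidableEq n]

theorem pow_apply_self [Semiring R] {M : Matrix n n R} (hM : M.IsUpperTriangular) (i : n)
    (k : ℕ) : (M ^ k) i i = M i i ^ k := by
  induction k with
  | zero => simp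
  | succ k ih => rw [pow_succ, mul_apply_self (hM.pow k) hM, ih, pow_succ]

theorem aeval_apply_self [CommSemiring R] {M : Matrix n n R} (hM : M.IsUpperTriangular)
    (p : R[X]) (i : n) : aeval M p i i = p.eval (M i i) := by
  simp only [aeval_eq_sum_range, sum_apply, smul_apply, hM.pow_apply_self, smul_eq_mul,
    eval_eq_sum_range]

protected theorem aeval [CommSemiring R] {M : Matrix n n R} (hM : M.IsUpperTriangular)
    (p : R[X]) : (aeval M p).IsUpperTriangular := by
  rw [aeval_eq_sum_range]
  exact Subalgebra.sum_mem (blockTriangularSubalgebra R R id) fun k _ =>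
    Subalgebra.smul_mem _ (Subalgebra.pow_mem _ hM k) _

theorem pow_card_eq_single_one [CommRing R] {M : Matrix n n R} (hM : M.IsUpperTriangular)
    (i₀ : n) (hdiag : ∀ i, M i i = single i₀ i₀ 1 i i)
    (hcomm : Commute M (single i₀ i₀ 1)) :
    M ^ Fintype.card n = single i₀ i₀ 1 := by
  have hMi₀ : M i₀ i₀ = 1 := by rw [hdiag, single_apply_same]
  have hE : IsIdempotentElem (single i₀ i₀ (1 : R)) := by
    rw [IsIdempotentElem, single_mul_single_same, mul_one]
  obtain ⟨m, hm⟩ := Nat.exists_eq_add_one_of_ne_zero (Fintype.card_pos_iff.mpr ⟨i₀⟩).ne'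
  have hN : (M - single i₀ i₀ 1) ^ Fintype.card n = 0 :=
    pow_card_eq_zero_of_strictUpperTriangular fun _ _ => hM.sub_single_one_apply_eq_zero hdiag
  rw [← add_sub_cancel (single i₀ i₀ 1) M, hm,
    hE.add_pow_succ_of_mul_eq_zero (single_one_mul_sub_eq_zero hcomm hMi₀)
      (sub_single_one_mul_eq_zero hcomm hMi₀), ← hm, hN, add_zero]

end IsUpperTriangular

end Matrix

/-- The functional calculus computation producing the matrix unit E₁₁. -/
theorem stmt_4 {k : ℕ} [NeZero k] (T : Matrix (Fin k) (Fin k) ℂ)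
    (hT : ∀ i j : Fin k, j ≤ i → T i j = 0)
    (lam : Fin k → ℂ)
    (p : Polynomial ℂ)
    (hp1 : p.eval (lam 0) = 1)
    (hp0 : ∀ i : Fin k, i ≠ 0 → p.eval (lam i) = 0)
    (hTrow : T * Matrix.single (0 : Fin k) 0 1 = 0)
    (hTcol : Matrix.single (0 : Fin k) 0 1 * T = 0) :
    ((aeval (Matrix.diagonal lam + T) p) ^ k) 0 0 = 1 ∧
    (∃ T' : Matrix (Fin k) (Fin k) ℂ,
      (∀ i j : Fin k, j ≤ i → T' i j = 0) ∧
      (∀ j : Fin k, T' 0 j = 0) ∧ (∀ i : Fin k, T' i 0 = 0) ∧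
      aeval (Matrix.diagonal lam + T) p = Matrix.single (0 : Fin k) 0 1 + T') ∧
    (aeval (Matrix.diagonal lam + T) p) ^ k = Matrix.single (0 : Fin k) 0 1 := by
  set E : Matrix (Fin k) (Fin k) ℂ := single 0 0 1 with hE
  have hA : (diagonal lam + T).IsUpperTriangular :=
    (blockTriangular_diagonal lam).add fun i j hij => hT i j hij.le
  have hQ := hA.aeval p
  have hQdiag : ∀ i, aeval (diagonal lam + T) p i i = E i i := by
    intro i
    rw [hA.aeval_apply_self p i]
    rcases eq_or_ne i 0 with rfl | hi
    · simp [hT 0 0 le_rfl, hp1, E]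
    · simp [hT i i le_rfl, hp0 i hi, E, hi.symm]
  have hQE : Commute (aeval (diagonal lam + T) p) E := by
    have hDE : Commute (diagonal lam) E := by
      rw [hE, ← diagonal_single]
      exact commute_diagonal _ _
    exact (hDE.add_left (hTrow.trans hTcol.symm)).aeval_left p
  have hQ00 : aeval (diagonal lam + T) p 0 0 = 1 := by simp [hQdiag, E]
  have hQk : aeval (diagonal lam + T) p ^ k = E := by
    simpa using hQ.pow_card_eq_single_one 0 hQdiag hQE
  refine ⟨by simp [hQk, E], ⟨aeval (diagonal lam + T) p - E,
    fun _ _ => hQ.sub_single_one_apply_eq_zero hQdiag, fun j => ?_, fun i => ?_,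
    (add_sub_cancel E _).symm⟩, hQk⟩
  · simpa [E] using congrFun (congrFun (single_one_mul_sub_eq_zero hQE hQ00) 0) j
  · simpa [E] using congrFun (congrFun (sub_single_one_mul_eq_zero hQE hQ00) i) 0
end

section
/- Let n ≥ 1, z_1,…,z_{k+1} ∈ ℂ^n with ‖z_i‖ < δ < 1, write z_i = (z_{i1},…,z_{in}). For each 1 ≤ j ≤ n and a word w = l_1…l_k in the alphabet {1,…,n}, define T_j = diag(z_{1j},…,z_{k+1,j}) + (1−δ) Σ_{i : l_i = j} E_{i,i+1} ∈ M_{k+1}(ℂ). Then the row matrix [T_1 … T_n] (as an operator from (ℂ^{k+1})^n to ℂ^{k+1}) has operator norm strictly less than 1. -/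
/-!
Split the row `[T₁ … Tₙ]` as `D + (1 - δ) S`, with `D` the row of diagonal parts and `S` the row of
superdiagonal parts, and bound both through the C*-identity `‖A‖ ^ 2 = ‖A Aᴴ‖`. Since
`D Dᴴ = diag (‖z_i‖ ^ 2)`, `‖D‖ ≤ max ‖z_i‖ < δ`. The superdiagonal parts have disjoint supports, so
`S` is a partial permutation matrix: `S Sᴴ` is an orthogonal projection and `‖S‖ ≤ 1`.
-/

open Matrix

open scoped Matrix.Norms.L2Operator

namespace Matrix

variable {β ι l m n α : Type*}

def blockRow (T : ι → Matrix m n α) : Matrix m (ι × n) α :=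
  of fun i p => T p.1 i p.2

lemma blockRow_add [Add α] (T T' : ι → Matrix m n α) :
    blockRow (T + T') = blockRow T + blockRow T' :=
  rfl

lemma blockRow_smul {R : Type*} [SMul R α] (c : R) (T : ι → Matrix m n α) :
    blockRow (c • T) = c • blockRow T :=
  rfl

lemma blockRow_sum_ite_single [AddCommMonoid α] [Fintype β] [DecidableEq ι] [DecidableEq m]
    [DecidableEq n] (w : β → ι) (e : β → m) (f : β → n) (a : α) :
    blockRow (fun j => ∑ b, if w b = j then single (e b) (f b) a else 0) =
      ∑ b, single (e b) (w b, f b) a := by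
  ext i ⟨j, i'⟩
  simp only [blockRow, of_apply, sum_apply]
  refine Finset.sum_congr rfl fun b _ => ?_
  by_cases hw : w b = j <;> simp [hw, single_apply, Prod.ext_iff]

lemma blockRow_mul_conjTranspose [Fintype ι] [Fintype n] [NonUnitalNonAssocSemiring α] [Star α]
    (T : ι → Matrix m n α) : blockRow T * (blockRow T)ᴴ = ∑ j, T j * (T j)ᴴ := by
  ext i i'
  simp [blockRow, mul_apply, sum_apply, Fintype.sum_prod_type]

lemma sum_single_one_mul_sum_single_one [NonAssocSemiring α] [Fintype β] [DecidableEq β]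
    [Fintype m] [DecidableEq l] [DecidableEq m] [DecidableEq n] (e : β → l) (g : β → m)
    (h : β → n) (hg : g.Injective) :
    (∑ b, single (e b) (g b) (1 : α)) * ∑ b, single (g b) (h b) (1 : α) =
      ∑ b, single (e b) (h b) (1 : α) := by
  have hprod : ∀ b b', single (e b) (g b) (1 : α) * single (g b') (h b') (1 : α) =
      if b = b' then single (e b) (h b') (1 : α) else 0 := by
    intro b b'
    split_ifs with hbb'
    · rw [hbb', single_mul_single_same, mul_one]
    · exact single_mul_single_of_ne (c := (1 : α)) _ _ _ (hg.ne hbb') _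
  simp only [Matrix.sum_mul, Matrix.mul_sum, hprod, Finset.sum_ite_eq', Finset.mem_univ, if_true]

section L2OpNorm

variable {𝕜 : Type*} [RCLike 𝕜] [Fintype m] [Fintype n] [DecidableEq m] [DecidableEq n]

lemma l2_opNorm_mul_self_conjTranspose (A : Matrix m n 𝕜) : ‖A * Aᴴ‖ = ‖A‖ * ‖A‖ := by
  simpa [l2_opNorm_conjTranspose] using l2_opNorm_conjTranspose_mul_self Aᴴ

lemma l2_opNorm_sum_single_one_le_one [Fintype β] [DecidableEq β] {e : β → m} {g : β → n}
    (he : e.Injective) (hg : g.Injective) : ‖∑ b, single (e b) (g b) (1 : 𝕜)‖ ≤ 1 := by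
  set A := ∑ b, single (e b) (g b) (1 : 𝕜)
  set P := ∑ b, single (e b) (e b) (1 : 𝕜)
  have hAA : A * Aᴴ = P := by
    simp only [A, P, conjTranspose_sum, conjTranspose_single, star_one]
    exact sum_single_one_mul_sum_single_one e g e hg
  have hP : IsStarProjection P :=
    ⟨sum_single_one_mul_sum_single_one e e e he, by simp [IsSelfAdjoint, P, star_eq_conjTranspose]⟩
  have hPle := hP.norm_le
  rw [← hAA, l2_opNorm_mul_self_conjTranspose] at hPle
  nlinarith [norm_nonneg A]

lemma l2_opNorm_blockRow_diagonal_le [Fintype ι] [DecidableEq ι] (z : m → EuclideanSpace 𝕜 ι)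
    {C : ℝ} (hC : 0 ≤ C) (hz : ∀ i, ‖z i‖ ≤ C) :
    ‖blockRow fun j => diagonal fun i => z i j‖ ≤ C := by
  set M := blockRow fun j => diagonal fun i => z i j
  have hMM : M * Mᴴ = diagonal fun i => ((‖z i‖ ^ 2 : ℝ) : 𝕜) := by
    ext i i'
    by_cases h : i = i' <;>
      simp [M, h, blockRow_mul_conjTranspose, sum_apply, EuclideanSpace.norm_sq_eq,
        RCLike.mul_conj]
  have hsq : ‖M‖ * ‖M‖ ≤ C * C := by
    rw [← l2_opNorm_mul_self_conjTranspose, hMM, l2_opNorm_diagonal]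
    refine (pi_norm_le_iff_of_nonneg (by positivity)).mpr fun i => ?_
    rw [RCLike.norm_ofReal, abs_of_nonneg (by positivity), sq]
    exact mul_self_le_mul_self (norm_nonneg _) (hz i)
  nlinarith [norm_nonneg M]

end L2OpNorm

end Matrix

theorem stmt_7_general {n k : ℕ} (δ : ℝ) (hδ : δ < 1)
    (z : Fin (k + 1) → EuclideanSpace ℂ (Fin n))
    (hz : ∀ i, ‖z i‖ < δ)
    (w : Fin k → Fin n)
    (T : Fin n → Matrix (Fin (k + 1)) (Fin (k + 1)) ℂ)
    (hT : ∀ j, T j = Matrix.diagonal (fun i => z i j) +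
      ((1 - δ : ℝ) : ℂ) • ∑ i : Fin k,
        if w i = j then Matrix.single i.castSucc i.succ (1 : ℂ) else 0)
    (R : Matrix (Fin (k + 1)) (Fin n × Fin (k + 1)) ℂ)
    (hR : ∀ i j, R i j = T j.1 i j.2) :
    ‖LinearMap.toContinuousLinearMap (Matrix.toEuclideanLin R)‖ < 1 := by
  have hnorm : ‖LinearMap.toContinuousLinearMap (toEuclideanLin R)‖ = ‖R‖ :=
    (l2_opNorm_def R).symm
  obtain ⟨i₀, hi₀⟩ := Finite.exists_max fun i => ‖z i‖
  have hRT : R = blockRow (fun j => diagonal fun i => z i j) + ((1 - δ : ℝ) : ℂ) •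
      ∑ l : Fin k, single l.castSucc (w l, l.succ) (1 : ℂ) := by
    rw [← blockRow_sum_ite_single, ← blockRow_smul, ← blockRow_add]
    exact Matrix.ext fun i p => by rw [hR, hT]; rfl
  have hshift : ‖∑ l : Fin k, single l.castSucc (w l, l.succ) (1 : ℂ)‖ ≤ 1 :=
    l2_opNorm_sum_single_one_le_one (Fin.castSucc_injective k)
      fun l l' h => Fin.succ_injective k (congrArg Prod.snd h)
  rw [hnorm]
  calc ‖R‖ ≤ ‖z i₀‖ + (1 - δ) * 1 := by
        rw [hRT]
        refine (norm_add_le _ _).trans (add_le_add ?_ ?_)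
        · exact l2_opNorm_blockRow_diagonal_le z (norm_nonneg _) hi₀
        · rw [norm_smul, Complex.norm_real, Real.norm_of_nonneg (by linarith)]
          exact mul_le_mul_of_nonneg_left hshift (by linarith)
    _ < 1 := by linarith [hz i₀]

/-- The row matrix [T₁ … Tₙ] built from the nest representation ρ_{Z,w} is a strict
row contraction. -/
theorem stmt_7 {n k : ℕ} (hn : 1 ≤ n) (δ : ℝ) (hδ : δ < 1)
    (z : Fin (k + 1) → EuclideanSpace ℂ (Fin n))
    (hz : ∀ i, ‖z i‖ < δ)
    (w : Fin k → Fin n)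
    (T : Fin n → Matrix (Fin (k + 1)) (Fin (k + 1)) ℂ)
    (hT : ∀ j, T j = Matrix.diagonal (fun i => z i j) +
      ((1 - δ : ℝ) : ℂ) • ∑ i : Fin k,
        if w i = j then Matrix.single i.castSucc i.succ (1 : ℂ) else 0)
    (R : Matrix (Fin (k + 1)) (Fin n × Fin (k + 1)) ℂ)
    (hR : ∀ i j, R i j = T j.1 i j.2) :
    ‖LinearMap.toContinuousLinearMap (Matrix.toEuclideanLin R)‖ < 1 :=
  stmt_7_general δ hδ z hz w T hT R hR
end

section
/- With the notation of the construction ρ_{Z,w} (T_j = diag(z_{ij})_{i=1}^{k+1} + (1−δ)Σ_{l_i=j}E_{i,i+1} in M_{k+1}(ℂ) for a fixed word w = l_1…l_k), for the word w itself the (1, k+1)-entry of the product T_{l_1} T_{l_2} ⋯ T_{l_k} equals (1−δ)^k plus a polynomial in the coordinates z_{ij} with zero constant term; in particular when all z_i = 0 this entry equals (1−δ)^k. -/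
/-!
Replacing the diagonal entries `z i j` by indeterminates `X (i, j)` turns each `T_j` into a
matrix over a polynomial ring, so the entry is the evaluation at `z` of one fixed polynomial `Q`.
The constant term of `Q` is its value at `z = 0`, where only the superdiagonal parts of the
`T_{l_i}` survive; along the word `w` their product has a single path `0 → 1 → ⋯ → k` from the
first to the last basis vector, each step contributing `1 - δ`.
-/

open Matrix

section WordShift

variable {R α : Type*} [Semiring R] [DecidableEq α] {k : ℕ}

def wordShift (c : R) (w : Fin k → α) (j : α) : Matrix (Fin (k + 1)) (Fin (k + 1)) R :=
  c • ∑ i : Fin k, if w i = j then single i.castSucc i.succ (1 : R) else 0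

theorem wordShift_apply_succ (c : R) (w : Fin k → α) (j : α) (t : Fin (k + 1)) (i : Fin k) :
    wordShift c w j t i.succ = if t = i.castSucc ∧ w i = j then c else 0 := by
  simp only [wordShift, Matrix.smul_apply, Matrix.sum_apply,
    apply_ite (fun M : Matrix _ _ R => M t i.succ), single_apply, Fin.succ_inj,
    Matrix.zero_apply, smul_eq_mul]
  rw [Finset.sum_eq_single i (fun x _ hx => by simp [hx]) (by simp)]
  by_cases ht : t = i.castSucc <;> by_cases hw : w i = j <;> simp [ht, hw, eq_comm]

theorem wordShift_prod_apply_castLE (c : R) (w : Fin k → α) :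
    ∀ (m : ℕ) (hm : m ≤ k),
      (List.ofFn fun i : Fin m => wordShift c w (w (Fin.castLE hm i))).prod 0
        (Fin.castLE (Nat.succ_le_succ hm) (Fin.last m)) = c ^ m := by
  intro m
  induction m with
  | zero => intro hm; simp
  | succ m ih =>
    intro hm
    have hlast : Fin.castLE (Nat.succ_le_succ hm) (Fin.last (m + 1)) =
        (Fin.castLE hm (Fin.last m)).succ := Fin.ext rfl
    have hprev : (Fin.castLE hm (Fin.last m)).castSucc =
        Fin.castLE (Nat.succ_le_succ (Nat.le_of_succ_le hm)) (Fin.last m) := Fin.ext rfl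
    rw [List.ofFn_succ', List.prod_concat, mul_apply, hlast,
      Finset.sum_eq_single (Fin.castLE hm (Fin.last m)).castSucc]
    · rw [wordShift_apply_succ, if_pos ⟨rfl, rfl⟩, hprev, pow_succ, ← ih (Nat.le_of_succ_le hm)]
      rfl
    · intro t _ ht
      rw [wordShift_apply_succ, if_neg fun h => ht h.1, mul_zero]
    · simp

theorem wordShift_prod_apply_last (c : R) (w : Fin k → α) :
    (List.ofFn fun i : Fin k => wordShift c w (w i)).prod 0 (Fin.last k) = c ^ k := by
  simpa using wordShift_prod_apply_castLE c w k le_rfl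

theorem wordShift_map {S : Type*} [Semiring S] (f : R →+* S) (c : R) (w : Fin k → α) (j : α) :
    (wordShift c w j).map f = wordShift (f c) w j := by
  ext a b
  simp [wordShift, Matrix.sum_apply, apply_ite (fun M : Matrix _ _ R => M a b),
    apply_ite (fun M : Matrix _ _ S => M a b), apply_ite f, single_apply]

end WordShift

theorem RingHom.map_list_prod_ofFn_apply {R S ι : Type*} [Semiring R] [Semiring S]
    [Fintype ι] [DecidableEq ι] (f : R →+* S) {m : ℕ} (M : Fin m → Matrix ι ι R) (a b : ι) :
    f ((List.ofFn M).prod a b) = (List.ofFn fun i => (M i).map f).prod a b := by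
  rw [← map_apply (f := f), ← RingHom.mapMatrix_apply, map_list_prod, List.map_ofFn]
  rfl

section Generic

open MvPolynomial

variable {R α : Type*} [CommSemiring R] [DecidableEq α] {k : ℕ}

noncomputable def genericWordMatrix (c : R) (w : Fin k → α) (j : α) :
    Matrix (Fin (k + 1)) (Fin (k + 1)) (MvPolynomial (Fin (k + 1) × α) R) :=
  diagonal (fun i => X (i, j)) + wordShift (C c) w j

theorem genericWordMatrix_map_eval (c : R) (w : Fin k → α) (j : α) (x : Fin (k + 1) × α → R) :
    (genericWordMatrix c w j).map (eval x) = diagonal (fun i => x (i, j)) + wordShift c w j := by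
  rw [genericWordMatrix, Matrix.map_add _ (map_add _), diagonal_map (map_zero _), wordShift_map,
    eval_C]
  simp only [eval_X]

end Generic

open MvPolynomial

theorem stmt_8_general {n k : ℕ} (δ : ℝ)
    (w : Fin k → Fin n)
    (T : (Fin (k + 1) → EuclideanSpace ℂ (Fin n)) → Fin n →
      Matrix (Fin (k + 1)) (Fin (k + 1)) ℂ)
    (hT : ∀ z j, T z j = Matrix.diagonal (fun i => z i j) +
      ((1 - δ : ℝ) : ℂ) • ∑ i : Fin k,
        if w i = j then Matrix.single i.castSucc i.succ (1 : ℂ) else 0) :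
    ∃ P : MvPolynomial (Fin (k + 1) × Fin n) ℂ,
      MvPolynomial.coeff 0 P = 0 ∧
      ∀ z : Fin (k + 1) → EuclideanSpace ℂ (Fin n), (∀ i, ‖z i‖ < δ) →
        ((List.ofFn fun i : Fin k => T z (w i)).prod) 0 (Fin.last k) =
          ((1 - δ : ℝ) : ℂ) ^ k + MvPolynomial.eval (fun q => z q.1 q.2) P := by
  set c : ℂ := ((1 - δ : ℝ) : ℂ)
  set Q := (List.ofFn fun i => genericWordMatrix c w (w i)).prod 0 (Fin.last k)
  have eval_Q (x : Fin (k + 1) × Fin n → ℂ) : eval x Q =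
      (List.ofFn fun i => diagonal (fun l => x (l, w i)) + wordShift c w (w i)).prod 0
        (Fin.last k) := by
    simp only [Q, RingHom.map_list_prod_ofFn_apply, genericWordMatrix_map_eval]
  refine ⟨Q - C (c ^ k), ?_, fun z _ => ?_⟩
  · rw [coeff_sub, coeff_zero_C, ← constantCoeff_eq, ← eval_zero, eval_Q]
    simp [wordShift_prod_apply_last]
  · have hTz (j : Fin n) : T z j = diagonal (fun i => z i j) + wordShift c w j := hT z j
    rw [map_sub, eval_C, eval_Q]
    simp only [hTz]
    ring

/-- The (1, k+1)-entry of ρ_{Z,w}(S_w) is (1−δ)^k plus a polynomial in the coordinates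
z_{ij} with zero constant term; in particular it is (1−δ)^k at z = 0. -/
theorem stmt_8 {n k : ℕ} (δ : ℝ) (hδ0 : 0 ≤ δ) (hδ : δ < 1)
    (w : Fin k → Fin n)
    (T : (Fin (k + 1) → EuclideanSpace ℂ (Fin n)) → Fin n →
      Matrix (Fin (k + 1)) (Fin (k + 1)) ℂ)
    (hT : ∀ z j, T z j = Matrix.diagonal (fun i => z i j) +
      ((1 - δ : ℝ) : ℂ) • ∑ i : Fin k,
        if w i = j then Matrix.single i.castSucc i.succ (1 : ℂ) else 0) :
    ∃ P : MvPolynomial (Fin (k + 1) × Fin n) ℂ,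
      MvPolynomial.coeff 0 P = 0 ∧
      ∀ z : Fin (k + 1) → EuclideanSpace ℂ (Fin n), (∀ i, ‖z i‖ < δ) →
        ((List.ofFn fun i : Fin k => T z (w i)).prod) 0 (Fin.last k) =
          ((1 - δ : ℝ) : ℂ) ^ k + MvPolynomial.eval (fun q => z q.1 q.2) P :=
  stmt_8_general δ w T hT
end

section
/- With the same notation, if v is a word of length |v| < k, or |v| = k with v ≠ w, then the (1, k+1)-entry of T_{v_1}⋯T_{v_{|v|}} is 0. -/
/-!
Every `T_j` is upper bidiagonal, so the `(a, b)`-entry of a product of `|v|` of them is a sum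
over paths `a = c₀ ≤ c₁ ≤ ⋯ ≤ c_{|v|} = b` with steps `0` or `1`. It vanishes when
`b - a > |v|`, and when `b - a = |v|` only the path of superdiagonal steps survives; the `i`-th
such step `a + i → a + i + 1` of `T_{v_i}` is zero unless `v_i = w_{a+i}`, i.e. unless `v` is a
prefix of `w.drop a`.
-/

open Matrix

namespace Matrix

variable {R : Type*} [Semiring R] {m : ℕ}

def IsUpperBidiagonal (M : Matrix (Fin m) (Fin m) R) : Prop :=
  ∀ a c : Fin m, M a c ≠ 0 → (a : ℕ) ≤ c ∧ (c : ℕ) ≤ a + 1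

section Superdiagonal

variable (d : Fin m → R) (s : R) (p : Fin m → Prop) [DecidablePred p]

theorem isUpperBidiagonal_diagonal_add_smul_superdiag :
    (diagonal d + s • of fun i i' : Fin m =>
      if (i' : ℕ) = i + 1 ∧ p i then (1 : R) else 0).IsUpperBidiagonal := by
  intro a c hac
  by_cases h : a = c
  · omega
  · have hc : (c : ℕ) = a + 1 := by
      by_contra hc
      simp [h, hc] at hac
    omega

theorem diagonal_add_smul_superdiag_apply_eq_zero {a c : Fin m} (hc : (c : ℕ) = a + 1)
    (ha : ¬ p a) :
    (diagonal d + s • of fun i i' : Fin m =>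
      if (i' : ℕ) = i + 1 ∧ p i then (1 : R) else 0) a c = 0 := by
  have hac : a ≠ c := fun h => by rw [h] at hc; omega
  simp [diagonal_apply_ne _ hac, ha]

end Superdiagonal

theorem list_prod_apply_eq_zero_of_add_length_lt {L : List (Matrix (Fin m) (Fin m) R)}
    (hL : ∀ M ∈ L, M.IsUpperBidiagonal) {a b : Fin m} (hab : a + L.length < b) :
    L.prod a b = 0 := by
  induction L generalizing a with
  | nil => exact one_apply_ne (Fin.ne_of_lt (by simpa using hab))
  | cons M L ih =>
    rw [List.prod_cons, mul_apply]
    refine Finset.sum_eq_zero fun c _ => ?_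
    by_cases hc : (c : ℕ) ≤ a + 1
    · rw [ih (fun N hN => hL N (List.mem_cons_of_mem M hN)) (by simp at hab; omega), mul_zero]
    · have hMac : M a c = 0 := by_contra fun hMac => hc (hL M List.mem_cons_self a c hMac).2
      rw [hMac, zero_mul]

theorem list_prod_cons_apply_of_add_length_eq {M : Matrix (Fin m) (Fin m) R}
    {L : List (Matrix (Fin m) (Fin m) R)} (hM : M.IsUpperBidiagonal)
    (hL : ∀ N ∈ L, N.IsUpperBidiagonal) {a b c : Fin m} (hab : a + (L.length + 1) = b)
    (hc : (c : ℕ) = a + 1) : (M :: L).prod a b = M a c * L.prod c b := by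
  rw [List.prod_cons, mul_apply]
  refine Finset.sum_eq_single c (fun d _ hdc => ?_) (by simp)
  by_cases hda : d = a
  · rw [hda, list_prod_apply_eq_zero_of_add_length_lt hL (by omega), mul_zero]
  · have hMad : M a d = 0 := by
      by_contra hMad
      have := hM a d hMad
      exact hdc (Fin.ext (by have := Fin.val_ne_of_ne hda; omega))
    rw [hMad, zero_mul]

theorem list_prod_map_apply_eq_zero_of_not_prefix {α : Type*} (w : List α)
    {T : α → Matrix (Fin m) (Fin m) R} (hT : ∀ j, (T j).IsUpperBidiagonal)
    (hsup : ∀ j (a c : Fin m), (c : ℕ) = a + 1 → w[(a : ℕ)]? ≠ some j → T j a c = 0)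
    (v : List α) {a b : Fin m} (hab : a + v.length = b) (hv : ¬ v <+: w.drop a) :
    (v.map T).prod a b = 0 := by
  induction v generalizing a with
  | nil => exact (hv List.nil_prefix).elim
  | cons j v ih =>
    let c : Fin m := ⟨a + 1, by simp at hab; omega⟩
    rw [List.map_cons, list_prod_cons_apply_of_add_length_eq (hT j)
      (List.forall_mem_map.mpr fun j _ => hT j)
      (c := c) (by simpa using hab) rfl]
    by_cases hj : w[(a : ℕ)]? = some j
    · obtain ⟨ha, rfl⟩ := List.getElem?_eq_some_iff.mp hj
      rw [List.drop_eq_getElem_cons ha, List.cons_prefix_cons] at hv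
      rw [ih (a := c) (by simp [c] at hab ⊢; omega) (by simpa using hv), mul_zero]
    · rw [hsup j a c rfl hj, zero_mul]

end Matrix

theorem stmt_9_general {n k : ℕ} (δ : ℝ)
    (z : Fin (k + 1) → EuclideanSpace ℂ (Fin n))
    (w : List (Fin n)) (hw : w.length = k)
    (T : Fin n → Matrix (Fin (k + 1)) (Fin (k + 1)) ℂ)
    (hT : ∀ j, T j = Matrix.diagonal (fun i => z i j) +
      ((1 - δ : ℝ) : ℂ) • Matrix.of (fun i i' : Fin (k + 1) =>
        if (i' : ℕ) = (i : ℕ) + 1 ∧ w[(i : ℕ)]? = some j then 1 else 0))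
    (v : List (Fin n))
    (hv : v.length < k ∨ (v.length = k ∧ v ≠ w)) :
    ((v.map T).prod) 0 (Fin.last k) = 0 := by
  have hbidiag : ∀ j, (T j).IsUpperBidiagonal := fun j =>
    hT j ▸ isUpperBidiagonal_diagonal_add_smul_superdiag _ _ _
  have hsup : ∀ j (a c : Fin (k + 1)), (c : ℕ) = a + 1 → w[(a : ℕ)]? ≠ some j →
      T j a c = 0 := fun j a c hc hj =>
    hT j ▸ diagonal_add_smul_superdiag_apply_eq_zero _ _ _ hc hj
  rcases hv with hlt | ⟨hlen, hne⟩
  · exact list_prod_apply_eq_zero_of_add_length_lt (List.forall_mem_map.mpr fun j _ => hbidiag j)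
      (by simpa using hlt)
  · refine list_prod_map_apply_eq_zero_of_not_prefix w hbidiag hsup v (by simpa using hlen) ?_
    rw [Fin.val_zero, List.drop_zero]
    exact fun h => hne (h.eq_of_length (hlen.trans hw.symm))

/-- Vanishing part of Lemma 4.2: for a word v with |v| < k, or |v| = k and v ≠ w, the
(1, k+1)-entry of the corresponding product of the matrices T_j is zero. -/
theorem stmt_9 {n k : ℕ} (δ : ℝ) (hδ0 : 0 ≤ δ) (hδ : δ < 1)
    (z : Fin (k + 1) → EuclideanSpace ℂ (Fin n)) (hz : ∀ i, ‖z i‖ < δ)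
    (w : List (Fin n)) (hw : w.length = k)
    (T : Fin n → Matrix (Fin (k + 1)) (Fin (k + 1)) ℂ)
    (hT : ∀ j, T j = Matrix.diagonal (fun i => z i j) +
      ((1 - δ : ℝ) : ℂ) • Matrix.of (fun i i' : Fin (k + 1) =>
        if (i' : ℕ) = (i : ℕ) + 1 ∧ w[(i : ℕ)]? = some j then 1 else 0))
    (v : List (Fin n))
    (hv : v.length < k ∨ (v.length = k ∧ v ≠ w)) :
    ((v.map T).prod) 0 (Fin.last k) = 0 :=
  stmt_9_general δ z w hw T hT v hv
end
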